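/- arXiv:2201.04510 — 9 statements merged into one kernel-verified Lean document; each statement's English description precedes it below -/
import Mathlib

section
/- With a = -2c and b = 0 (and c ≠ 0), the characteristic polynomial of the Jacobian of the Lorenz–Haken system at the equilibrium p = (0,0,0,Δ), Δ = (ec - c² - d²)/c, equals λ⁴ + (a + 2c)λ³ + (c² + d² + a(c - d²/c))λ², which simplifies to λ²(λ² + 3d² - c²). In particular, if 3d² - c² > 0, the eigenvalues are 0, 0, ±i√(3d² - c²), so p is a zero-Hopf equilibrium. -/
open Polynomial

/-- The Jacobian of the Lorenz–Haken system at an equilibrium `(0, 0, 0, w)` with `b = 0`,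
where `k = e - w`. -/
def lorenzHakenJacobian {R : Type*} [Ring R] (a c d k : R) : Matrix (Fin 4) (Fin 4) R :=
  !![-a, a, 0, 0; k, -c, -d, 0; 0, d, -c, 0; 0, 0, 0, 0]

theorem charpoly_lorenzHakenJacobian {R : Type*} [CommRing R] (a c d k : R) :
    (lorenzHakenJacobian a c d k).charpoly =
      X ^ 4 + C (a + 2 * c) * X ^ 3 + C (c ^ 2 + d ^ 2 + 2 * a * c - a * k) * X ^ 2 +
        C (a * (c ^ 2 + d ^ 2 - c * k)) * X := by
  simp [Matrix.charpoly, lorenzHakenJacobian, Matrix.det_succ_row_zero, Fin.sum_univ_succ,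
    Matrix.charmatrix_apply, Matrix.diagonal_apply, Fin.succAbove, map_ofNat]
  ring

/-- At `p = (0, 0, 0, Δ)` one has `e - Δ = c + d² / c`, which kills the linear coefficient. -/
theorem charpoly_lorenzHakenJacobian_add_sq_div {K : Type*} [Field K] (a c d : K) (hc : c ≠ 0) :
    (lorenzHakenJacobian a c d (c + d ^ 2 / c)).charpoly =
      X ^ 4 + C (a + 2 * c) * X ^ 3 + C (c ^ 2 + d ^ 2 + a * (c - d ^ 2 / c)) * X ^ 2 := by
  have hlin : a * (c ^ 2 + d ^ 2 - c * (c + d ^ 2 / c)) = 0 := by field_simp; ring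
  rw [charpoly_lorenzHakenJacobian, hlin, C_0, zero_mul, add_zero]
  congr 3
  ring

theorem aeval_X_sq_mul_X_sq_add_C {s : ℝ} {z : ℂ} (hz : z ^ 2 = 0 ∨ z ^ 2 = -s) :
    aeval z (X ^ 2 * (X ^ 2 + C s)) = 0 := by
  simp only [map_mul, map_add, map_pow, aeval_X, aeval_C, Complex.coe_algebraMap]
  rcases hz with hz | hz <;> simp [hz]

theorem sq_I_mul_sqrt {s : ℝ} (hs : 0 ≤ s) : (Complex.I * (Real.sqrt s : ℂ)) ^ 2 = -s := by
  rw [mul_pow, Complex.I_sq, ← Complex.ofReal_pow, Real.sq_sqrt hs, neg_one_mul]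

/-- With `a = -2c`, `b = 0`, `c ≠ 0`, the characteristic polynomial of the Jacobian of the
Lorenz–Haken system at `p = (0,0,0,Δ)` equals `λ²(λ² + 3d² - c²)`; in particular, if
`3d² - c² > 0` the eigenvalues are `0, 0, ±i√(3d² - c²)`, so `p` is a zero-Hopf
equilibrium. -/
theorem lorenz_haken_charpoly_p (c d : ℝ) (hc : c ≠ 0) :
    (Matrix.charpoly
        (!![2 * c, -2 * c, 0, 0; c + d ^ 2 / c, -c, -d, 0; 0, d, -c, 0; 0, 0, 0, 0] :
          Matrix (Fin 4) (Fin 4) ℝ)) =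
      X ^ 2 * (X ^ 2 + C (3 * d ^ 2 - c ^ 2)) ∧
    (3 * d ^ 2 - c ^ 2 > 0 →
      aeval ((0 : ℂ))
          (Matrix.charpoly
            (!![2 * c, -2 * c, 0, 0; c + d ^ 2 / c, -c, -d, 0; 0, d, -c, 0; 0, 0, 0, 0] :
              Matrix (Fin 4) (Fin 4) ℝ)) = 0 ∧
      aeval (Complex.I * (Real.sqrt (3 * d ^ 2 - c ^ 2) : ℂ))
          (Matrix.charpoly
            (!![2 * c, -2 * c, 0, 0; c + d ^ 2 / c, -c, -d, 0; 0, d, -c, 0; 0, 0, 0, 0] :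
              Matrix (Fin 4) (Fin 4) ℝ)) = 0 ∧
      aeval (-(Complex.I * (Real.sqrt (3 * d ^ 2 - c ^ 2) : ℂ)))
          (Matrix.charpoly
            (!![2 * c, -2 * c, 0, 0; c + d ^ 2 / c, -c, -d, 0; 0, d, -c, 0; 0, 0, 0, 0] :
              Matrix (Fin 4) (Fin 4) ℝ)) = 0) := by
  have hJ : (!![2 * c, -2 * c, 0, 0; c + d ^ 2 / c, -c, -d, 0; 0, d, -c, 0; 0, 0, 0, 0] :
      Matrix (Fin 4) (Fin 4) ℝ) = lorenzHakenJacobian (-2 * c) c d (c + d ^ 2 / c) := by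
    rw [lorenzHakenJacobian, neg_mul, neg_neg]
  have hchar : (lorenzHakenJacobian (-2 * c) c d (c + d ^ 2 / c)).charpoly =
      X ^ 2 * (X ^ 2 + C (3 * d ^ 2 - c ^ 2)) := by
    have hcoeff : c ^ 2 + d ^ 2 + -2 * c * (c - d ^ 2 / c) = 3 * d ^ 2 - c ^ 2 := by
      field_simp; ring
    rw [charpoly_lorenzHakenJacobian_add_sq_div _ _ _ hc, hcoeff,
      show -2 * c + 2 * c = 0 by ring, C_0]
    ring
  rw [hJ, hchar]
  refine ⟨rfl, fun hpos => ⟨?_, ?_, ?_⟩⟩ <;> apply aeval_X_sq_mul_X_sq_add_C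
  · simp
  · exact .inr (sq_I_mul_sqrt hpos.le)
  · exact .inr (by rw [neg_sq, sq_I_mul_sqrt hpos.le])
end

section
/- For the matrix M = [[-a, a, 0, 0], [c + d²/c, -c, -d, -s], [0, d, -c, 0], [s, s, 0, -b]] with s = √(b(ce - c² - d²)/c), the characteristic polynomial is λ⁴ + Aλ³ + Bλ² + Cλ + D with A = a + b + 2c, B = c² + d² + a(b + c - d²/c) + b(c - d²/c + e), C = b(ce + a(-c - 3d²/c + 2e)), and D = -2ab(c² + d² - ce). -/
open Polynomial

set_option maxHeartbeats 2000000 in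
theorem lorenz_haken_charpoly_aux (a b c d e s : ℝ) (hc : c ≠ 0)
    (hs2 : s ^ 2 = b * (c * e - c ^ 2 - d ^ 2) / c) :
    (Matrix.charpoly
        (!![-a, a, 0, 0;
            c + d ^ 2 / c, -c, -d, -s;
            0, d, -c, 0;
            s, s, 0, -b] : Matrix (Fin 4) (Fin 4) ℝ)) =
      X ^ 4 + C (a + b + 2 * c) * X ^ 3
        + C (c ^ 2 + d ^ 2 + a * (b + c - d ^ 2 / c) + b * (c - d ^ 2 / c + e)) * X ^ 2
        + C (b * (c * e + a * (-c - 3 * d ^ 2 / c + 2 * e))) * X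
        + C (-2 * a * b * (c ^ 2 + d ^ 2 - c * e)) := by
  have hs2' : s ^ 2 * c = b * (c * e - c ^ 2 - d ^ 2) := by
    field_simp at hs2; linarith
  rw [Matrix.charpoly]
  simp only [Matrix.det_succ_row_zero, Fin.sum_univ_succ, Matrix.charmatrix_apply,
    Matrix.one_apply, Matrix.submatrix_apply, Fin.succAbove, Matrix.cons_val', Matrix.cons_val_zero,
    Matrix.cons_val_one, Matrix.head_cons, Matrix.head_fin_const, Matrix.empty_val',
    Matrix.cons_val_fin_one, Matrix.det_fin_zero, Finset.univ_unique, Finset.sum_const,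
    Fin.val_zero, Fin.val_succ, Matrix.of_apply]
  norm_num [Fin.lt_def, Fin.castSucc, Fin.castAdd, Fin.castLE, Fin.succ, Matrix.diagonal_apply,
    Fin.ext_iff]
  apply Polynomial.funext
  intro x
  simp only [eval_add, eval_sub, eval_mul, eval_pow, eval_neg, eval_X, eval_C, eval_ofNat]
  field_simp
  linear_combination (2 * a * x + c * x + x ^ 2 + 2 * a * c) * hs2'

/-- Characteristic polynomial of the Jacobian of the Lorenz–Haken system at the
equilibrium `p₊`, with `s = √(b(ce - c² - d²)/c)`. -/
theorem lorenz_haken_charpoly_pplus (a b c d e : ℝ) (hc : c ≠ 0)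
    (hs : 0 ≤ b * (c * e - c ^ 2 - d ^ 2) / c) :
    (Matrix.charpoly
        (!![-a, a, 0, 0;
            c + d ^ 2 / c, -c, -d, -Real.sqrt (b * (c * e - c ^ 2 - d ^ 2) / c);
            0, d, -c, 0;
            Real.sqrt (b * (c * e - c ^ 2 - d ^ 2) / c),
              Real.sqrt (b * (c * e - c ^ 2 - d ^ 2) / c), 0, -b] :
          Matrix (Fin 4) (Fin 4) ℝ)) =
      X ^ 4 + C (a + b + 2 * c) * X ^ 3
        + C (c ^ 2 + d ^ 2 + a * (b + c - d ^ 2 / c) + b * (c - d ^ 2 / c + e)) * X ^ 2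
        + C (b * (c * e + a * (-c - 3 * d ^ 2 / c + 2 * e))) * X
        + C (-2 * a * b * (c ^ 2 + d ^ 2 - c * e)) :=
  lorenz_haken_charpoly_aux a b c d e _ hc (Real.sq_sqrt hs)
end

section
/- If a = -2c, b = 0 and d² = (c² + ω²)/3 with ω > 0 and c ≠ 0, then the Jacobian of the Lorenz–Haken system at the equilibrium p₊ has characteristic polynomial λ²(λ² + ω²); i.e. p₊ is a zero-Hopf equilibrium. -/
open Polynomial

/-- If `a = -2c`, `b = 0` and `d² = (c² + ω²)/3` with `ω > 0`, `c ≠ 0`, the Jacobian of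
the Lorenz–Haken system at `p₊` has characteristic polynomial `λ²(λ² + ω²)`, i.e. `p₊` is
a zero-Hopf equilibrium. -/
theorem lorenz_haken_pplus_zero_hopf (c d ω : ℝ) (hc : c ≠ 0) (hω : 0 < ω)
    (hd : d ^ 2 = (c ^ 2 + ω ^ 2) / 3) :
    (Matrix.charpoly
        (!![2 * c, -2 * c, 0, 0; c + d ^ 2 / c, -c, -d, 0; 0, d, -c, 0; 0, 0, 0, 0] :
          Matrix (Fin 4) (Fin 4) ℝ)) =
      X ^ 2 * (X ^ 2 + C (ω ^ 2)) := by
  rw [Matrix.charpoly]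
  simp [Matrix.det_succ_row_zero, Fin.sum_univ_succ, Matrix.charmatrix_apply,
    Matrix.diagonal]
  norm_num [Fin.ext_iff, Fin.succ, Fin.succAbove, Fin.lt_def]
  have h3 : (3 : ℝ[X]) * C d ^ 2 = C c ^ 2 + C ω ^ 2 := by
    rw [← map_ofNat (C : ℝ →+* ℝ[X]) 3, ← C_pow, ← C_pow, ← C_pow, ← C_mul, ← C_add, hd]
    congr 1; ring
  have h4 : C c * C (d ^ 2 / c) = C d ^ 2 := by
    rw [← C_mul, mul_div_cancel₀ _ hc, C_pow]
  have h2 : (C 2 : ℝ[X]) = 2 := map_ofNat _ 2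
  rw [h2]
  linear_combination X ^ 2 * h3 + 2 * (X ^ 2 + C c * X) * h4
end

section
/- Let ω > 0, c ≠ 0, a₁, b₁, d₁, e₁ real, η = 3ce₁ + 2√3·d₁√(c² + ω²). The averaged system f₁(r,Z,W) = r(6c²(e₁ - W) - 3a₁ω² + 4√3·c·d₁√(c²+ω²))/(6ω³), f₂(r,Z,W) = -2cZ(3c(e₁-W) + 2√3·d₁√(c²+ω²))/(3ω³), f₃(r,Z,W) = (12c⁴Z² + 2c²r²ω² - 3b₁Wω⁴)/(3ω⁵) has exactly five zeros: s₀ = (0,0,0); s₁,₂ = (0, ∓√(b₁ω⁴η)/(2√3·c^{5/2}), e₁ + 2d₁√(c²+ω²)/(√3·c)); and s₃,₄ = (∓√(b₁ω²(6c²e₁ - 3a₁ω² + 4√3·c·d₁√(c²+ω²)))/(2c²), 0, e₁ + (-3a₁ω² + 4√3·c·d₁√(c²+ω²))/(6c²)), whenever the expressions under the square roots are nonnegative. -/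
/-!
Let `α` and `β` be the `W`-coordinates of `s₃,₄` and `s₁,₂`. Then `f₁` and `f₂` are nonzero
multiples of `r (α - W)` and `Z (β - W)`, and `6 c² (α - β) = -3 a₁ ω² ≠ 0`. Hence either
`r = Z = 0`, and `f₃ = 0` forces `W = 0` since `b₁ ≠ 0`, or exactly one of `r`, `Z` vanishes and
`W` is the corresponding level; then `f₃ = 0` says that the square of the other coordinate is a
prescribed nonnegative number.
-/

theorem sq_mul_sq_eq_iff_eq_neg_or_eq_sqrt_div {A B x : ℝ} (hA : 0 ≤ A) (hB : B ≠ 0) :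
    B ^ 2 * x ^ 2 = A ↔ x = -(√A / B) ∨ x = √A / B := by
  calc B ^ 2 * x ^ 2 = A ↔ x ^ 2 = (√A / B) ^ 2 := by
        rw [div_pow, Real.sq_sqrt hA, eq_div_iff (pow_ne_zero 2 hB), mul_comm]
    _ ↔ _ := by rw [sq_eq_sq_iff_eq_or_eq_neg, or_comm]

theorem eq_iff_eq_of_sub_eq_mul_sub {R : Type*} [CommRing R] [NoZeroDivisors R]
    {a b a' b' u : R} (hu : u ≠ 0) (h : a' - b' = u * (a - b)) : a = b ↔ a' = b' := by
  rw [← sub_eq_zero, ← sub_eq_zero (a := a'), h, mul_eq_zero, or_iff_right hu]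

theorem two_branch_system_iff {R : Type*} [CommRing R] [NoZeroDivisors R]
    {α β p q k r Z W : R} (hαβ : α ≠ β) (hk : k ≠ 0) :
    (r * (α - W) = 0 ∧ Z * (β - W) = 0 ∧ p * Z ^ 2 + q * r ^ 2 = k * W) ↔
      (r = 0 ∧ Z = 0 ∧ W = 0) ∨ (r = 0 ∧ p * Z ^ 2 = k * β ∧ W = β) ∨
        (q * r ^ 2 = k * α ∧ Z = 0 ∧ W = α) := by
  constructor
  · rintro ⟨hr, hZ, hW⟩
    rcases mul_eq_zero.1 hr with rfl | hα <;> rcases mul_eq_zero.1 hZ with rfl | hβ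
    · refine .inl ⟨rfl, rfl, ?_⟩
      simpa [hk] using hW.symm
    · obtain rfl : W = β := (sub_eq_zero.1 hβ).symm
      exact .inr (.inl ⟨rfl, by simpa using hW, rfl⟩)
    · obtain rfl : W = α := (sub_eq_zero.1 hα).symm
      exact .inr (.inr ⟨by simpa using hW, rfl, rfl⟩)
    · exact absurd ((sub_eq_zero.1 hα).trans (sub_eq_zero.1 hβ).symm) hαβ
  · rintro (⟨rfl, rfl, rfl⟩ | ⟨rfl, hZ, rfl⟩ | ⟨hr, rfl, rfl⟩)
    · simp
    · simpa using hZ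
    · simpa using hr

namespace LorenzHakenAveraged

-- `S` stands for `√(c² + ω²)`, which enters only as a constant.
variable {ω c a₁ b₁ d₁ e₁ S r Z W : ℝ}

theorem eq_zero_iff (hω : ω ≠ 0) (hc : c ≠ 0) :
    (r * (6 * c ^ 2 * (e₁ - W) - 3 * a₁ * ω ^ 2 + 4 * √3 * c * d₁ * S) / (6 * ω ^ 3) = 0 ∧
      -(2 * c * Z * (3 * c * (e₁ - W) + 2 * √3 * d₁ * S)) / (3 * ω ^ 3) = 0 ∧
      (12 * c ^ 4 * Z ^ 2 + 2 * c ^ 2 * r ^ 2 * ω ^ 2 - 3 * b₁ * W * ω ^ 4) / (3 * ω ^ 5) = 0) ↔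
    (r * (e₁ + (-3 * a₁ * ω ^ 2 + 4 * √3 * c * d₁ * S) / (6 * c ^ 2) - W) = 0 ∧
      Z * (e₁ + 2 * d₁ * S / (√3 * c) - W) = 0 ∧
      12 * c ^ 4 * Z ^ 2 + 2 * c ^ 2 * ω ^ 2 * r ^ 2 = 3 * b₁ * ω ^ 4 * W) := by
  have hf₁ : r * (6 * c ^ 2 * (e₁ - W) - 3 * a₁ * ω ^ 2 + 4 * √3 * c * d₁ * S) / (6 * ω ^ 3)
      = c ^ 2 / ω ^ 3 * (r * (e₁ + (-3 * a₁ * ω ^ 2 + 4 * √3 * c * d₁ * S) / (6 * c ^ 2) - W)) := by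
    field_simp
    ring
  have hf₂ : -(2 * c * Z * (3 * c * (e₁ - W) + 2 * √3 * d₁ * S)) / (3 * ω ^ 3)
      = -(2 * c ^ 2 / ω ^ 3) * (Z * (e₁ + 2 * d₁ * S / (√3 * c) - W)) := by
    have h3 : √3 ^ 2 = 3 := Real.sq_sqrt (by norm_num)
    field_simp
    linear_combination (-2 * Z * d₁ * S) * h3
  have hf₃ : (12 * c ^ 4 * Z ^ 2 + 2 * c ^ 2 * r ^ 2 * ω ^ 2 - 3 * b₁ * W * ω ^ 4) / (3 * ω ^ 5) = 0
      ↔ 12 * c ^ 4 * Z ^ 2 + 2 * c ^ 2 * ω ^ 2 * r ^ 2 = 3 * b₁ * ω ^ 4 * W := by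
    rw [div_eq_zero_iff, or_iff_left (by positivity), sub_eq_zero]
    ring_nf
  rw [hf₁, hf₂, hf₃]
  simp [hω, hc]

theorem levels_ne (hω : ω ≠ 0) (hc : c ≠ 0) (ha₁ : a₁ ≠ 0) :
    e₁ + (-3 * a₁ * ω ^ 2 + 4 * √3 * c * d₁ * S) / (6 * c ^ 2) ≠ e₁ + 2 * d₁ * S / (√3 * c) := by
  intro h
  have h3 : √3 ^ 2 = 3 := Real.sq_sqrt (by norm_num)
  have : √3 * a₁ * ω ^ 2 = 0 := by
    field_simp at h
    linear_combination (-1 / 3) * h + (4 / 3) * c * d₁ * S * h3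
  simp_all

theorem zBranch_iff (hc : 0 < c) (hη : b₁ * (3 * c * e₁ + 2 * √3 * d₁ * S) ≥ 0) :
    12 * c ^ 4 * Z ^ 2 = 3 * b₁ * ω ^ 4 * (e₁ + 2 * d₁ * S / (√3 * c)) ↔
      Z = -(√(b₁ * ω ^ 4 * (3 * c * e₁ + 2 * √3 * d₁ * S)) / (2 * √3 * (c ^ 2 * √c))) ∨
      Z = √(b₁ * ω ^ 4 * (3 * c * e₁ + 2 * √3 * d₁ * S)) / (2 * √3 * (c ^ 2 * √c)) := by
  have h3 : √3 ^ 2 = 3 := Real.sq_sqrt (by norm_num)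
  have hB : (2 * √3 * (c ^ 2 * √c)) ^ 2 = 12 * c ^ 5 := by
    rw [mul_pow, mul_pow, mul_pow, h3, Real.sq_sqrt hc.le]
    ring
  have hβ : 3 * c * (e₁ + 2 * d₁ * S / (√3 * c)) = 3 * c * e₁ + 2 * √3 * d₁ * S := by
    field_simp
    linear_combination -2 * d₁ * S * h3
  rw [← sq_mul_sq_eq_iff_eq_neg_or_eq_sqrt_div (by rw [mul_right_comm]; positivity)
    (by positivity)]
  exact eq_iff_eq_of_sub_eq_mul_sub hc.ne' (by linear_combination Z ^ 2 * hB + b₁ * ω ^ 4 * hβ)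

theorem rBranch_iff (hω : ω ≠ 0) (hc : c ≠ 0)
    (hμ : b₁ * (6 * c ^ 2 * e₁ - 3 * a₁ * ω ^ 2 + 4 * √3 * c * d₁ * S) ≥ 0) :
    2 * c ^ 2 * ω ^ 2 * r ^ 2
        = 3 * b₁ * ω ^ 4 * (e₁ + (-3 * a₁ * ω ^ 2 + 4 * √3 * c * d₁ * S) / (6 * c ^ 2)) ↔
      r = -(√(b₁ * ω ^ 2 * (6 * c ^ 2 * e₁ - 3 * a₁ * ω ^ 2 + 4 * √3 * c * d₁ * S)) / (2 * c ^ 2)) ∨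
      r = √(b₁ * ω ^ 2 * (6 * c ^ 2 * e₁ - 3 * a₁ * ω ^ 2 + 4 * √3 * c * d₁ * S))
        / (2 * c ^ 2) := by
  rw [← sq_mul_sq_eq_iff_eq_neg_or_eq_sqrt_div (by rw [mul_right_comm]; positivity)
    (by positivity)]
  exact eq_iff_eq_of_sub_eq_mul_sub (u := 2 * c ^ 2 / ω ^ 2) (by positivity) (by field_simp; ring)

end LorenzHakenAveraged

theorem averaged_system_origin_five_zeros_general
    (ω c a₁ b₁ d₁ e₁ : ℝ) (hω : 0 < ω) (hc : 0 < c) (ha₁ : a₁ ≠ 0) (hb₁ : b₁ ≠ 0)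
    (hη : b₁ * (3 * c * e₁ + 2 * Real.sqrt 3 * d₁ * Real.sqrt (c ^ 2 + ω ^ 2)) ≥ 0)
    (hμ : b₁ * (6 * c ^ 2 * e₁ - 3 * a₁ * ω ^ 2
          + 4 * Real.sqrt 3 * c * d₁ * Real.sqrt (c ^ 2 + ω ^ 2)) ≥ 0)
    (r Z W : ℝ) :
    (r * (6 * c ^ 2 * (e₁ - W) - 3 * a₁ * ω ^ 2
        + 4 * Real.sqrt 3 * c * d₁ * Real.sqrt (c ^ 2 + ω ^ 2)) / (6 * ω ^ 3) = 0 ∧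
     -(2 * c * Z * (3 * c * (e₁ - W)
        + 2 * Real.sqrt 3 * d₁ * Real.sqrt (c ^ 2 + ω ^ 2))) / (3 * ω ^ 3) = 0 ∧
     (12 * c ^ 4 * Z ^ 2 + 2 * c ^ 2 * r ^ 2 * ω ^ 2 - 3 * b₁ * W * ω ^ 4)
        / (3 * ω ^ 5) = 0) ↔
    ((r = 0 ∧ Z = 0 ∧ W = 0) ∨
     (r = 0 ∧
      Z = -(Real.sqrt (b₁ * ω ^ 4 * (3 * c * e₁
            + 2 * Real.sqrt 3 * d₁ * Real.sqrt (c ^ 2 + ω ^ 2)))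
          / (2 * Real.sqrt 3 * (c ^ 2 * Real.sqrt c))) ∧
      W = e₁ + 2 * d₁ * Real.sqrt (c ^ 2 + ω ^ 2) / (Real.sqrt 3 * c)) ∨
     (r = 0 ∧
      Z = Real.sqrt (b₁ * ω ^ 4 * (3 * c * e₁
            + 2 * Real.sqrt 3 * d₁ * Real.sqrt (c ^ 2 + ω ^ 2)))
          / (2 * Real.sqrt 3 * (c ^ 2 * Real.sqrt c)) ∧
      W = e₁ + 2 * d₁ * Real.sqrt (c ^ 2 + ω ^ 2) / (Real.sqrt 3 * c)) ∨
     (r = -(Real.sqrt (b₁ * ω ^ 2 * (6 * c ^ 2 * e₁ - 3 * a₁ * ω ^ 2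
            + 4 * Real.sqrt 3 * c * d₁ * Real.sqrt (c ^ 2 + ω ^ 2))) / (2 * c ^ 2)) ∧
      Z = 0 ∧
      W = e₁ + (-3 * a₁ * ω ^ 2
            + 4 * Real.sqrt 3 * c * d₁ * Real.sqrt (c ^ 2 + ω ^ 2)) / (6 * c ^ 2)) ∨
     (r = Real.sqrt (b₁ * ω ^ 2 * (6 * c ^ 2 * e₁ - 3 * a₁ * ω ^ 2
            + 4 * Real.sqrt 3 * c * d₁ * Real.sqrt (c ^ 2 + ω ^ 2))) / (2 * c ^ 2) ∧
      Z = 0 ∧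
      W = e₁ + (-3 * a₁ * ω ^ 2
            + 4 * Real.sqrt 3 * c * d₁ * Real.sqrt (c ^ 2 + ω ^ 2)) / (6 * c ^ 2))) := by
  have hk : 3 * b₁ * ω ^ 4 ≠ 0 := by positivity
  rw [LorenzHakenAveraged.eq_zero_iff hω.ne' hc.ne',
    two_branch_system_iff (LorenzHakenAveraged.levels_ne hω.ne' hc.ne' ha₁) hk,
    LorenzHakenAveraged.zBranch_iff hc hη, LorenzHakenAveraged.rBranch_iff hω.ne' hc.ne' hμ]
  simp only [and_or_left, or_and_right, or_assoc]

/-- The averaged system from the zero-Hopf bifurcation of the Lorenz–Haken system at the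
origin has exactly the five zeros `s₀, s₁, s₂, s₃, s₄`. -/
theorem averaged_system_origin_five_zeros
    (ω c a₁ b₁ d₁ e₁ : ℝ) (hω : 0 < ω) (hc : 0 < c) (ha₁ : a₁ ≠ 0) (hb₁ : b₁ ≠ 0)
    (hη : b₁ * (3 * c * e₁ + 2 * Real.sqrt 3 * d₁ * Real.sqrt (c ^ 2 + ω ^ 2)) ≥ 0)
    (hη0 : 3 * c * e₁ + 2 * Real.sqrt 3 * d₁ * Real.sqrt (c ^ 2 + ω ^ 2) ≠ 0)
    (hμ : b₁ * (6 * c ^ 2 * e₁ - 3 * a₁ * ω ^ 2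
          + 4 * Real.sqrt 3 * c * d₁ * Real.sqrt (c ^ 2 + ω ^ 2)) ≥ 0)
    (hη1 : 3 * a₁ * ω ^ 2
          - 2 * c * (3 * c * e₁ + 2 * Real.sqrt 3 * d₁ * Real.sqrt (c ^ 2 + ω ^ 2)) ≠ 0)
    (r Z W : ℝ) :
    (r * (6 * c ^ 2 * (e₁ - W) - 3 * a₁ * ω ^ 2
        + 4 * Real.sqrt 3 * c * d₁ * Real.sqrt (c ^ 2 + ω ^ 2)) / (6 * ω ^ 3) = 0 ∧
     -(2 * c * Z * (3 * c * (e₁ - W)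
        + 2 * Real.sqrt 3 * d₁ * Real.sqrt (c ^ 2 + ω ^ 2))) / (3 * ω ^ 3) = 0 ∧
     (12 * c ^ 4 * Z ^ 2 + 2 * c ^ 2 * r ^ 2 * ω ^ 2 - 3 * b₁ * W * ω ^ 4)
        / (3 * ω ^ 5) = 0) ↔
    ((r = 0 ∧ Z = 0 ∧ W = 0) ∨
     (r = 0 ∧
      Z = -(Real.sqrt (b₁ * ω ^ 4 * (3 * c * e₁
            + 2 * Real.sqrt 3 * d₁ * Real.sqrt (c ^ 2 + ω ^ 2)))
          / (2 * Real.sqrt 3 * (c ^ 2 * Real.sqrt c))) ∧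
      W = e₁ + 2 * d₁ * Real.sqrt (c ^ 2 + ω ^ 2) / (Real.sqrt 3 * c)) ∨
     (r = 0 ∧
      Z = Real.sqrt (b₁ * ω ^ 4 * (3 * c * e₁
            + 2 * Real.sqrt 3 * d₁ * Real.sqrt (c ^ 2 + ω ^ 2)))
          / (2 * Real.sqrt 3 * (c ^ 2 * Real.sqrt c)) ∧
      W = e₁ + 2 * d₁ * Real.sqrt (c ^ 2 + ω ^ 2) / (Real.sqrt 3 * c)) ∨
     (r = -(Real.sqrt (b₁ * ω ^ 2 * (6 * c ^ 2 * e₁ - 3 * a₁ * ω ^ 2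
            + 4 * Real.sqrt 3 * c * d₁ * Real.sqrt (c ^ 2 + ω ^ 2))) / (2 * c ^ 2)) ∧
      Z = 0 ∧
      W = e₁ + (-3 * a₁ * ω ^ 2
            + 4 * Real.sqrt 3 * c * d₁ * Real.sqrt (c ^ 2 + ω ^ 2)) / (6 * c ^ 2)) ∨
     (r = Real.sqrt (b₁ * ω ^ 2 * (6 * c ^ 2 * e₁ - 3 * a₁ * ω ^ 2
            + 4 * Real.sqrt 3 * c * d₁ * Real.sqrt (c ^ 2 + ω ^ 2))) / (2 * c ^ 2) ∧
      Z = 0 ∧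
      W = e₁ + (-3 * a₁ * ω ^ 2
            + 4 * Real.sqrt 3 * c * d₁ * Real.sqrt (c ^ 2 + ω ^ 2)) / (6 * c ^ 2))) :=
  averaged_system_origin_five_zeros_general ω c a₁ b₁ d₁ e₁ hω hc ha₁ hb₁ hη hμ r Z W
end

section
/- At the zeros s₃,₄ of the averaged system f = (f₁, f₂, f₃) from the zero-Hopf bifurcation at the origin, the determinant of the Jacobian of f equals a₁b₁(-6c²e₁ + 3a₁ω² - 4√3·c·d₁√(c²+ω²))/(3ω⁵); in particular it is nonzero whenever a₁ ≠ 0, b₁ ≠ 0 and 3a₁ω² ≠ 2c(3ce₁ + 2√3·d₁√(c²+ω²)). -/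
/-!
At `Z = 0` the Jacobian vanishes off the diagonal in its middle row and column, so its determinant
is `∂_Z f₂ · (∂_r f₁ · ∂_W f₃ - ∂_W f₁ · ∂_r f₃)`. The second coordinate `W₀` of `s₃,₄` is exactly
the zero of `∂_r f₁` and turns `∂_Z f₂` into `-a₁/ω`, leaving `-4a₁c⁴r₀²/(3ω⁷)`; the value of `r₀²`
read off `s₃,₄` gives the formula.
-/

open Real

theorem Matrix.det_fin_three_of_cross_zero {R : Type*} [CommRing R] (a p q s t : R) :
    !![a, 0, p; 0, q, 0; s, 0, t].det = q * (a * t - p * s) := by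
  rw [Matrix.det_fin_three]
  simp only [Matrix.of_apply, Matrix.cons_val', Matrix.cons_val_zero, Matrix.cons_val_one,
    Matrix.cons_val_two, Matrix.empty_val', Matrix.cons_val_fin_one, Matrix.head_cons,
    Matrix.tail_cons, Matrix.head_fin_const]
  ring

theorem sq_eq_of_eq_sqrt_div_or_neg {ρ d r : ℝ} (hρ : 0 ≤ ρ)
    (hr : r = √ρ / d ∨ r = -(√ρ / d)) : r ^ 2 = ρ / d ^ 2 := by
  rcases hr with rfl | rfl <;> simp only [neg_sq, div_pow, sq_sqrt hρ]

noncomputable section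

def partialJacobian (f₁ f₂ f₃ : ℝ → ℝ → ℝ → ℝ) (r Z W : ℝ) :
    Matrix (Fin 3) (Fin 3) ℝ :=
  !![deriv (fun x => f₁ x Z W) r, deriv (fun x => f₁ r x W) Z, deriv (fun x => f₁ r Z x) W;
     deriv (fun x => f₂ x Z W) r, deriv (fun x => f₂ r x W) Z, deriv (fun x => f₂ r Z x) W;
     deriv (fun x => f₃ x Z W) r, deriv (fun x => f₃ r x W) Z, deriv (fun x => f₃ r Z x) W]

namespace ZeroHopfAveraged

variable (ω c a₁ b₁ d₁ e₁ : ℝ)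

def f₁ (r _Z W : ℝ) : ℝ :=
  r * (6 * c ^ 2 * (e₁ - W) - 3 * a₁ * ω ^ 2 + 4 * √3 * c * d₁ * √(c ^ 2 + ω ^ 2)) / (6 * ω ^ 3)

def f₂ (_r Z W : ℝ) : ℝ :=
  -(2 * c * Z * (3 * c * (e₁ - W) + 2 * √3 * d₁ * √(c ^ 2 + ω ^ 2))) / (3 * ω ^ 3)

def f₃ (r Z W : ℝ) : ℝ :=
  (12 * c ^ 4 * Z ^ 2 + 2 * c ^ 2 * r ^ 2 * ω ^ 2 - 3 * b₁ * W * ω ^ 4) / (3 * ω ^ 5)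

theorem partialJacobian_eq (r Z W : ℝ) :
    partialJacobian (f₁ ω c a₁ d₁ e₁) (f₂ ω c d₁ e₁) (f₃ ω c b₁) r Z W =
      !![(6 * c ^ 2 * (e₁ - W) - 3 * a₁ * ω ^ 2 + 4 * √3 * c * d₁ * √(c ^ 2 + ω ^ 2)) / (6 * ω ^ 3),
          0, -(c ^ 2 * r) / ω ^ 3;
         0, -(2 * c * (3 * c * (e₁ - W) + 2 * √3 * d₁ * √(c ^ 2 + ω ^ 2))) / (3 * ω ^ 3),
          2 * c ^ 2 * Z / ω ^ 3;
         4 * c ^ 2 * r * ω ^ 2 / (3 * ω ^ 5), 8 * c ^ 4 * Z / ω ^ 5, -(b₁ * ω ^ 4) / ω ^ 5] := by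
  ext i j
  fin_cases i <;> fin_cases j <;> simp [partialJacobian, f₁, f₂, f₃] <;> ring

theorem det_partialJacobian_eq (hω : ω ≠ 0) (hc : c ≠ 0) (r : ℝ) :
    (partialJacobian (f₁ ω c a₁ d₁ e₁) (f₂ ω c d₁ e₁) (f₃ ω c b₁) r 0
        (e₁ + (-3 * a₁ * ω ^ 2 + 4 * √3 * c * d₁ * √(c ^ 2 + ω ^ 2)) / (6 * c ^ 2))).det =
      -(4 * a₁ * c ^ 4 * r ^ 2) / (3 * ω ^ 7) := by
  rw [partialJacobian_eq]
  simp only [mul_zero, zero_div]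
  rw [Matrix.det_fin_three_of_cross_zero]
  field_simp
  ring

end ZeroHopfAveraged

end

/-- At the zeros `s₃,₄` of the averaged system from the zero-Hopf bifurcation at the
origin, the Jacobian determinant equals
`a₁b₁(-6c²e₁ + 3a₁ω² - 4√3·c·d₁√(c²+ω²))/(3ω⁵)`, nonzero whenever `a₁ ≠ 0`, `b₁ ≠ 0` and
`3a₁ω² ≠ 2c(3ce₁ + 2√3·d₁√(c²+ω²))`. -/
theorem averaged_system_origin_jacobian_s34
    (ω c a₁ b₁ d₁ e₁ : ℝ) (hω : 0 < ω) (hc : c ≠ 0)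
    (hrad : 0 ≤ b₁ * ω ^ 2 * (6 * c ^ 2 * e₁ - 3 * a₁ * ω ^ 2
        + 4 * Real.sqrt 3 * c * d₁ * Real.sqrt (c ^ 2 + ω ^ 2))) :
    let f₁ : ℝ → ℝ → ℝ → ℝ := fun r Z W =>
      r * (6 * c ^ 2 * (e₁ - W) - 3 * a₁ * ω ^ 2
        + 4 * Real.sqrt 3 * c * d₁ * Real.sqrt (c ^ 2 + ω ^ 2)) / (6 * ω ^ 3)
    let f₂ : ℝ → ℝ → ℝ → ℝ := fun r Z W =>
      -(2 * c * Z * (3 * c * (e₁ - W)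
        + 2 * Real.sqrt 3 * d₁ * Real.sqrt (c ^ 2 + ω ^ 2))) / (3 * ω ^ 3)
    let f₃ : ℝ → ℝ → ℝ → ℝ := fun r Z W =>
      (12 * c ^ 4 * Z ^ 2 + 2 * c ^ 2 * r ^ 2 * ω ^ 2 - 3 * b₁ * W * ω ^ 4) / (3 * ω ^ 5)
    let Z₀ : ℝ := 0
    let W₀ : ℝ := e₁ + (-3 * a₁ * ω ^ 2
        + 4 * Real.sqrt 3 * c * d₁ * Real.sqrt (c ^ 2 + ω ^ 2)) / (6 * c ^ 2)
    ∀ r₀ : ℝ,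
      (r₀ = Real.sqrt (b₁ * ω ^ 2 * (6 * c ^ 2 * e₁ - 3 * a₁ * ω ^ 2
            + 4 * Real.sqrt 3 * c * d₁ * Real.sqrt (c ^ 2 + ω ^ 2))) / (2 * c ^ 2) ∨
       r₀ = -(Real.sqrt (b₁ * ω ^ 2 * (6 * c ^ 2 * e₁ - 3 * a₁ * ω ^ 2
            + 4 * Real.sqrt 3 * c * d₁ * Real.sqrt (c ^ 2 + ω ^ 2))) / (2 * c ^ 2))) →
      (Matrix.det
          !![deriv (fun r => f₁ r Z₀ W₀) r₀, deriv (fun Z => f₁ r₀ Z W₀) Z₀,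
              deriv (fun W => f₁ r₀ Z₀ W) W₀;
             deriv (fun r => f₂ r Z₀ W₀) r₀, deriv (fun Z => f₂ r₀ Z W₀) Z₀,
              deriv (fun W => f₂ r₀ Z₀ W) W₀;
             deriv (fun r => f₃ r Z₀ W₀) r₀, deriv (fun Z => f₃ r₀ Z W₀) Z₀,
              deriv (fun W => f₃ r₀ Z₀ W) W₀] =
        a₁ * b₁ * (-6 * c ^ 2 * e₁ + 3 * a₁ * ω ^ 2
          - 4 * Real.sqrt 3 * c * d₁ * Real.sqrt (c ^ 2 + ω ^ 2)) / (3 * ω ^ 5)) ∧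
      (a₁ ≠ 0 → b₁ ≠ 0 →
        3 * a₁ * ω ^ 2 ≠ 2 * c * (3 * c * e₁
          + 2 * Real.sqrt 3 * d₁ * Real.sqrt (c ^ 2 + ω ^ 2)) →
        Matrix.det
          !![deriv (fun r => f₁ r Z₀ W₀) r₀, deriv (fun Z => f₁ r₀ Z W₀) Z₀,
              deriv (fun W => f₁ r₀ Z₀ W) W₀;
             deriv (fun r => f₂ r Z₀ W₀) r₀, deriv (fun Z => f₂ r₀ Z W₀) Z₀,
              deriv (fun W => f₂ r₀ Z₀ W) W₀;
             deriv (fun r => f₃ r Z₀ W₀) r₀, deriv (fun Z => f₃ r₀ Z W₀) Z₀,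
              deriv (fun W => f₃ r₀ Z₀ W) W₀] ≠ 0) := by
  intro f₁ f₂ f₃ Z₀ W₀ r₀ hr₀
  have hdet : (partialJacobian (ZeroHopfAveraged.f₁ ω c a₁ d₁ e₁) (ZeroHopfAveraged.f₂ ω c d₁ e₁)
      (ZeroHopfAveraged.f₃ ω c b₁) r₀ Z₀ W₀).det =
        a₁ * b₁ * (-6 * c ^ 2 * e₁ + 3 * a₁ * ω ^ 2
          - 4 * Real.sqrt 3 * c * d₁ * Real.sqrt (c ^ 2 + ω ^ 2)) / (3 * ω ^ 5) := by
    rw [ZeroHopfAveraged.det_partialJacobian_eq _ _ _ _ _ _ hω.ne' hc,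
      sq_eq_of_eq_sqrt_div_or_neg hrad hr₀]
    field_simp
    ring
  refine ⟨hdet, fun ha hb hne => hdet ▸ div_ne_zero (mul_ne_zero (mul_ne_zero ha hb) ?_) ?_⟩
  · contrapose! hne
    linear_combination hne
  · positivity
end

section
/- At the zeros s₁,₂ of the averaged system f = (f₁, f₂, f₃) from the zero-Hopf bifurcation at the origin, the determinant of the Jacobian of f equals 2a₁b₁c(3ce₁ + 2√3·d₁√(c²+ω²))/(3ω⁵). -/
/-!
The `W`-coordinate of the zeros annihilates the factor `3c(e₁ - W) + 2√3·d₁√(c²+ω²)`, to which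
`∂f₂/∂Z` and the `W`-dependent part of `∂f₁/∂r` are proportional. At `r = 0` the Jacobian
is then block diagonal, `diag(-a₁/(2ω), [[0, 2c²Z/ω³], [8c⁴Z/ω⁵, -b₁/ω]])`, with determinant
`8a₁c⁶Z²/ω⁹`, and the `Z`-coordinate of the zero satisfies `12c⁵Z² = b₁ω⁴(3ce₁ + 2√3·d₁√(c²+ω²))`.
-/

open Real

theorem Matrix.det_fin_three_block_one_two {R : Type*} [CommRing R] (p a b s t : R) :
    !![p, 0, 0; 0, a, b; 0, s, t].det = p * (a * t - b * s) := by
  simp only [Matrix.det_fin_three, Matrix.of_apply, Matrix.cons_val', Matrix.cons_val_zero,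
    Matrix.cons_val_fin_one, Matrix.cons_val_one, Matrix.cons_val]
  ring

theorem sq_eq_div_sq_of_eq_neg_or_eq_sqrt_div {x y z : ℝ} (hy : 0 ≤ y)
    (h : x = -(√y / z) ∨ x = √y / z) : x ^ 2 = y / z ^ 2 := by
  rw [sq_eq_sq_iff_eq_or_eq_neg.2 h.symm, div_pow, sq_sqrt hy]

theorem two_sqrt_three_mul_sq_mul_sqrt_sq {c : ℝ} (hc : 0 ≤ c) :
    (2 * √3 * (c ^ 2 * √c)) ^ 2 = 12 * c ^ 5 := by
  rw [mul_pow, mul_pow, mul_pow, sq_sqrt (by norm_num), sq_sqrt hc]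
  ring

/-- At the zeros `s₁,₂` of the averaged system from the zero-Hopf bifurcation at the
origin, the Jacobian determinant equals `2a₁b₁c(3ce₁ + 2√3·d₁√(c²+ω²))/(3ω⁵)`. -/
theorem averaged_system_origin_jacobian_s12
    (ω c a₁ b₁ d₁ e₁ : ℝ) (hω : 0 < ω) (hc : 0 < c)
    (hrad : 0 ≤ b₁ * (3 * c * e₁ + 2 * Real.sqrt 3 * d₁ * Real.sqrt (c ^ 2 + ω ^ 2))) :
    let f₁ : ℝ → ℝ → ℝ → ℝ := fun r Z W =>
      r * (6 * c ^ 2 * (e₁ - W) - 3 * a₁ * ω ^ 2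
        + 4 * Real.sqrt 3 * c * d₁ * Real.sqrt (c ^ 2 + ω ^ 2)) / (6 * ω ^ 3)
    let f₂ : ℝ → ℝ → ℝ → ℝ := fun r Z W =>
      -(2 * c * Z * (3 * c * (e₁ - W)
        + 2 * Real.sqrt 3 * d₁ * Real.sqrt (c ^ 2 + ω ^ 2))) / (3 * ω ^ 3)
    let f₃ : ℝ → ℝ → ℝ → ℝ := fun r Z W =>
      (12 * c ^ 4 * Z ^ 2 + 2 * c ^ 2 * r ^ 2 * ω ^ 2 - 3 * b₁ * W * ω ^ 4) / (3 * ω ^ 5)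
    let r₀ : ℝ := 0
    let W₀ : ℝ := e₁ + 2 * d₁ * Real.sqrt (c ^ 2 + ω ^ 2) / (Real.sqrt 3 * c)
    ∀ Z₀ : ℝ,
      (Z₀ = -(Real.sqrt (b₁ * ω ^ 4 * (3 * c * e₁
            + 2 * Real.sqrt 3 * d₁ * Real.sqrt (c ^ 2 + ω ^ 2)))
          / (2 * Real.sqrt 3 * (c ^ 2 * Real.sqrt c))) ∨
       Z₀ = Real.sqrt (b₁ * ω ^ 4 * (3 * c * e₁
            + 2 * Real.sqrt 3 * d₁ * Real.sqrt (c ^ 2 + ω ^ 2)))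
          / (2 * Real.sqrt 3 * (c ^ 2 * Real.sqrt c))) →
      Matrix.det
          !![deriv (fun r => f₁ r Z₀ W₀) r₀, deriv (fun Z => f₁ r₀ Z W₀) Z₀,
              deriv (fun W => f₁ r₀ Z₀ W) W₀;
             deriv (fun r => f₂ r Z₀ W₀) r₀, deriv (fun Z => f₂ r₀ Z W₀) Z₀,
              deriv (fun W => f₂ r₀ Z₀ W) W₀;
             deriv (fun r => f₃ r Z₀ W₀) r₀, deriv (fun Z => f₃ r₀ Z W₀) Z₀,
              deriv (fun W => f₃ r₀ Z₀ W) W₀] =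
        2 * a₁ * b₁ * c * (3 * c * e₁
          + 2 * Real.sqrt 3 * d₁ * Real.sqrt (c ^ 2 + ω ^ 2)) / (3 * ω ^ 5) := by
  intro f₁ f₂ f₃ r₀ W₀ Z₀ hZ₀
  set K := 3 * c * e₁ + 2 * √3 * d₁ * √(c ^ 2 + ω ^ 2)
  have hW₀ : 3 * c * (e₁ - W₀) + 2 * √3 * d₁ * √(c ^ 2 + ω ^ 2) = 0 := by
    have hsqrt3 : √3 ^ 2 = 3 := sq_sqrt (by norm_num)
    simp only [W₀]
    field_simp
    linear_combination 2 * d₁ * √(c ^ 2 + ω ^ 2) * hsqrt3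
  have hZ₀sq : 12 * c ^ 5 * Z₀ ^ 2 = b₁ * ω ^ 4 * K := by
    have hradicand : 0 ≤ b₁ * ω ^ 4 * K := by
      rw [mul_right_comm]
      exact mul_nonneg hrad (by positivity)
    rw [sq_eq_div_sq_of_eq_neg_or_eq_sqrt_div hradicand hZ₀, two_sqrt_three_mul_sq_mul_sqrt_sq hc.le]
    field_simp
  calc _ = !![(6 * c ^ 2 * (e₁ - W₀) - 3 * a₁ * ω ^ 2 + 4 * √3 * c * d₁ * √(c ^ 2 + ω ^ 2))
              / (6 * ω ^ 3), 0, 0;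
            0, 0, 2 * c * Z₀ * (3 * c) / (3 * ω ^ 3);
            0, 12 * c ^ 4 * (2 * Z₀) / (3 * ω ^ 5), -(3 * b₁ * ω ^ 4) / (3 * ω ^ 5)].det := by
        simp [f₁, f₂, f₃, r₀, hW₀]
    _ = 2 * a₁ * b₁ * c * K / (3 * ω ^ 5) := by
        rw [Matrix.det_fin_three_block_one_two]
        field_simp
        linear_combination (-96 * c ^ 7 * Z₀ ^ 2) * hW₀ + 12 * a₁ * ω ^ 2 * c * hZ₀sq
end

section
/- For the averaged system of the zero-Hopf bifurcation at p, the determinant of the Jacobian at s₂ and s₃ equals a₁²b₁(c⁴ - 8c²d² + 7d⁴ + 2cd²e)/(3d² - c²)^{7/2}, which is nonzero when a₁ ≠ 0, b₁ ≠ 0, 3d² > c², and c⁴ - 8c²d² + 7d⁴ + 2cd²e ≠ 0. -/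
/-!
At `s₂,₃` the equilibrium value `z₀` kills `∂f₁/∂r`, and `w₀ = 0` kills `∂f₂/∂w` and `∂f₃/∂z`, so the
Jacobian is block triangular and its determinant is `-(∂f₁/∂z · ∂f₂/∂r · ∂f₃/∂w)`. Writing
`S = √(3d² - c²)`, so that `c² - 3d² = -S²` and `c³ - 3cd² = -cS²`, this equals
`-4a₁c²d²r₀² / (3S⁷)`, and `4c²d²r₀² = -3a₁b₁(c⁴ - 8c²d² + 7d⁴ + 2cd²e)` by the choice of `r₀`.
-/

open Real

noncomputable section

def jacobian3 (f₁ f₂ f₃ : ℝ → ℝ → ℝ → ℝ) (r z w : ℝ) : Matrix (Fin 3) (Fin 3) ℝ :=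
  !![deriv (fun r => f₁ r z w) r, deriv (fun z => f₁ r z w) z, deriv (fun w => f₁ r z w) w;
     deriv (fun r => f₂ r z w) r, deriv (fun z => f₂ r z w) z, deriv (fun w => f₂ r z w) w;
     deriv (fun r => f₃ r z w) r, deriv (fun z => f₃ r z w) z, deriv (fun w => f₃ r z w) w]

theorem Matrix.det_fin_three_of_block {R : Type*} [CommRing R] (p q t s : R) :
    !![0, p, 0; q, t, 0; 0, 0, s].det = -(p * q * s) := by
  simp [Matrix.det_fin_three]

namespace LorenzHaken

variable (a₁ b₁ c d e : ℝ)

def f₁ (r z _w : ℝ) : ℝ :=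
  r * (a₁ * (c ^ 2 - 3 * d ^ 2) - 2 * c ^ 2 * z) / (2 * Real.sqrt (3 * d ^ 2 - c ^ 2) ^ 3)

def f₂ (r z w : ℝ) : ℝ :=
  2 * c ^ 2 * (3 * a₁ * b₁ * (c ^ 4 - 4 * c ^ 2 * d ^ 2 + 3 * d ^ 4)
        * (c ^ 2 + d ^ 2 - c * e) / (2 * c ^ 2)
      - 2 * d ^ 2 * (c ^ 2 - 3 * d ^ 2) * r ^ 2 + 12 * c ^ 4 * w ^ 2
      - 3 * b₁ * (c ^ 2 - 3 * d ^ 2) * (2 * c ^ 2 - 2 * d ^ 2 - c * e) * z)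
    / (6 * Real.sqrt (3 * d ^ 2 - c ^ 2) * (c ^ 3 - 3 * c * d ^ 2) ^ 2)

def f₃ (_r z w : ℝ) : ℝ :=
  2 * c ^ 2 * w * z / Real.sqrt (3 * d ^ 2 - c ^ 2) ^ 3

def z₀ : ℝ := a₁ * (1 - 3 * d ^ 2 / c ^ 2) / 2

theorem jacobian3_eq (r z w : ℝ) :
    jacobian3 (f₁ a₁ c d) (f₂ a₁ b₁ c d e) (f₃ c d) r z w =
      !![(a₁ * (c ^ 2 - 3 * d ^ 2) - 2 * c ^ 2 * z) / (2 * √(3 * d ^ 2 - c ^ 2) ^ 3),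
          -(c ^ 2 * r / √(3 * d ^ 2 - c ^ 2) ^ 3), 0;
        2 * c ^ 2 * (-(4 * d ^ 2 * (c ^ 2 - 3 * d ^ 2) * r))
            / (6 * √(3 * d ^ 2 - c ^ 2) * (c ^ 3 - 3 * c * d ^ 2) ^ 2),
          2 * c ^ 2 * (-(3 * b₁ * (c ^ 2 - 3 * d ^ 2) * (2 * c ^ 2 - 2 * d ^ 2 - c * e)))
            / (6 * √(3 * d ^ 2 - c ^ 2) * (c ^ 3 - 3 * c * d ^ 2) ^ 2),
          2 * c ^ 2 * (24 * c ^ 4 * w) / (6 * √(3 * d ^ 2 - c ^ 2) * (c ^ 3 - 3 * c * d ^ 2) ^ 2);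
        0, 2 * c ^ 2 * w / √(3 * d ^ 2 - c ^ 2) ^ 3, 2 * c ^ 2 * z / √(3 * d ^ 2 - c ^ 2) ^ 3] := by
  ext i j
  fin_cases i <;> fin_cases j <;> simp [jacobian3, f₁, f₂, f₃] <;> ring

theorem jacobian3_at_equilibrium (hc : c ≠ 0) (hS : 0 < 3 * d ^ 2 - c ^ 2) (r : ℝ) :
    jacobian3 (f₁ a₁ c d) (f₂ a₁ b₁ c d e) (f₃ c d) r (z₀ a₁ c d) 0 =
      !![0, -(c ^ 2 * r / √(3 * d ^ 2 - c ^ 2) ^ 3), 0;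
        4 * d ^ 2 * r / (3 * √(3 * d ^ 2 - c ^ 2) ^ 3),
          b₁ * (2 * c ^ 2 - 2 * d ^ 2 - c * e) / √(3 * d ^ 2 - c ^ 2) ^ 3, 0;
        0, 0, -(a₁ / √(3 * d ^ 2 - c ^ 2))] := by
  have hz : 2 * c ^ 2 * z₀ a₁ c d = a₁ * (c ^ 2 - 3 * d ^ 2) := by
    rw [z₀]; field_simp
  rw [jacobian3_eq, hz]
  set S := √(3 * d ^ 2 - c ^ 2)
  have hS₀ : S ≠ 0 := (sqrt_pos.mpr hS).ne'
  have hS₂ : c ^ 2 - 3 * d ^ 2 = -S ^ 2 := by rw [sq_sqrt hS.le]; ring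
  have hcS : c ^ 3 - 3 * c * d ^ 2 = -(c * S ^ 2) := by linear_combination c * hS₂
  rw [hcS, hS₂]
  ext i j
  fin_cases i <;> fin_cases j <;> simp <;> field_simp <;> ring

theorem det_jacobian3_at_equilibrium (hc : c ≠ 0) (hS : 0 < 3 * d ^ 2 - c ^ 2) (r : ℝ) :
    (jacobian3 (f₁ a₁ c d) (f₂ a₁ b₁ c d e) (f₃ c d) r (z₀ a₁ c d) 0).det =
      -(4 * a₁ * c ^ 2 * d ^ 2 * r ^ 2) / (3 * √(3 * d ^ 2 - c ^ 2) ^ 7) := by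
  have hS₀ : √(3 * d ^ 2 - c ^ 2) ≠ 0 := (sqrt_pos.mpr hS).ne'
  rw [jacobian3_at_equilibrium a₁ b₁ c d e hc hS, Matrix.det_fin_three_of_block]
  field_simp

theorem det_jacobian3_at_s₂₃ (hc : c ≠ 0) (hd : d ≠ 0) (hS : 0 < 3 * d ^ 2 - c ^ 2)
    (ha₁ : 0 ≤ a₁) (hb₁Q : b₁ * (c ^ 4 - 8 * c ^ 2 * d ^ 2 + 7 * d ^ 4 + 2 * c * d ^ 2 * e) ≤ 0)
    {r : ℝ} (hr : r = √3 * √a₁ * √(-(b₁ * (c ^ 4 - 8 * c ^ 2 * d ^ 2 + 7 * d ^ 4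
        + 2 * c * d ^ 2 * e))) / (2 * c * d) ∨
      r = -(√3 * √a₁ * √(-(b₁ * (c ^ 4 - 8 * c ^ 2 * d ^ 2 + 7 * d ^ 4
        + 2 * c * d ^ 2 * e))) / (2 * c * d))) :
    (jacobian3 (f₁ a₁ c d) (f₂ a₁ b₁ c d e) (f₃ c d) r (z₀ a₁ c d) 0).det =
      a₁ ^ 2 * b₁ * (c ^ 4 - 8 * c ^ 2 * d ^ 2 + 7 * d ^ 4 + 2 * c * d ^ 2 * e)
        / √(3 * d ^ 2 - c ^ 2) ^ 7 := by
  set Q := c ^ 4 - 8 * c ^ 2 * d ^ 2 + 7 * d ^ 4 + 2 * c * d ^ 2 * e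
  have hr_sq : r ^ 2 = 3 * a₁ * -(b₁ * Q) / (2 * c * d) ^ 2 := by
    rw [sq_eq_sq_iff_eq_or_eq_neg.mpr hr, div_pow, mul_pow, mul_pow, sq_sqrt zero_le_three,
      sq_sqrt ha₁, sq_sqrt (neg_nonneg.mpr hb₁Q)]
  rw [det_jacobian3_at_equilibrium a₁ b₁ c d e hc hS, hr_sq]
  field_simp
  ring

end LorenzHaken

end

/-- At the zeros `s₂,₃` of the averaged system from the zero-Hopf bifurcation at `p`, the
Jacobian determinant equals `a₁²b₁(c⁴ - 8c²d² + 7d⁴ + 2cd²e)/(3d² - c²)^{7/2}`, which is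
nonzero when `a₁ ≠ 0`, `b₁ ≠ 0`, `3d² > c²` and `c⁴ - 8c²d² + 7d⁴ + 2cd²e ≠ 0`. -/
theorem averaged_system_p_jacobian_s23
    (a₁ b₁ c d e : ℝ) (hc : c ≠ 0) (hd : d ≠ 0) (h3d : 3 * d ^ 2 - c ^ 2 > 0)
    (ha₁ : 0 < a₁)
    (hrad : b₁ * (c ^ 4 - 8 * c ^ 2 * d ^ 2 + 7 * d ^ 4 + 2 * c * d ^ 2 * e) ≤ 0) :
    let f₁ : ℝ → ℝ → ℝ → ℝ := fun r z w =>
      r * (a₁ * (c ^ 2 - 3 * d ^ 2) - 2 * c ^ 2 * z)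
        / (2 * Real.sqrt (3 * d ^ 2 - c ^ 2) ^ 3)
    let f₂ : ℝ → ℝ → ℝ → ℝ := fun r z w =>
      2 * c ^ 2 * (3 * a₁ * b₁ * (c ^ 4 - 4 * c ^ 2 * d ^ 2 + 3 * d ^ 4)
            * (c ^ 2 + d ^ 2 - c * e) / (2 * c ^ 2)
          - 2 * d ^ 2 * (c ^ 2 - 3 * d ^ 2) * r ^ 2 + 12 * c ^ 4 * w ^ 2
          - 3 * b₁ * (c ^ 2 - 3 * d ^ 2) * (2 * c ^ 2 - 2 * d ^ 2 - c * e) * z)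
        / (6 * Real.sqrt (3 * d ^ 2 - c ^ 2) * (c ^ 3 - 3 * c * d ^ 2) ^ 2)
    let f₃ : ℝ → ℝ → ℝ → ℝ := fun r z w =>
      2 * c ^ 2 * w * z / Real.sqrt (3 * d ^ 2 - c ^ 2) ^ 3
    let z₀ : ℝ := a₁ * (1 - 3 * d ^ 2 / c ^ 2) / 2
    let w₀ : ℝ := 0
    ∀ r₀ : ℝ,
      (r₀ = Real.sqrt 3 * Real.sqrt a₁
          * Real.sqrt (-(b₁ * (c ^ 4 - 8 * c ^ 2 * d ^ 2 + 7 * d ^ 4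
              + 2 * c * d ^ 2 * e))) / (2 * c * d) ∨
       r₀ = -(Real.sqrt 3 * Real.sqrt a₁
          * Real.sqrt (-(b₁ * (c ^ 4 - 8 * c ^ 2 * d ^ 2 + 7 * d ^ 4
              + 2 * c * d ^ 2 * e))) / (2 * c * d))) →
      (Matrix.det
          !![deriv (fun r => f₁ r z₀ w₀) r₀, deriv (fun z => f₁ r₀ z w₀) z₀,
              deriv (fun w => f₁ r₀ z₀ w) w₀;
             deriv (fun r => f₂ r z₀ w₀) r₀, deriv (fun z => f₂ r₀ z w₀) z₀,
              deriv (fun w => f₂ r₀ z₀ w) w₀;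
             deriv (fun r => f₃ r z₀ w₀) r₀, deriv (fun z => f₃ r₀ z w₀) z₀,
              deriv (fun w => f₃ r₀ z₀ w) w₀] =
        a₁ ^ 2 * b₁ * (c ^ 4 - 8 * c ^ 2 * d ^ 2 + 7 * d ^ 4 + 2 * c * d ^ 2 * e)
          / Real.sqrt (3 * d ^ 2 - c ^ 2) ^ 7) ∧
      (a₁ ≠ 0 → b₁ ≠ 0 →
        c ^ 4 - 8 * c ^ 2 * d ^ 2 + 7 * d ^ 4 + 2 * c * d ^ 2 * e ≠ 0 →
        Matrix.det
          !![deriv (fun r => f₁ r z₀ w₀) r₀, deriv (fun z => f₁ r₀ z w₀) z₀,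
              deriv (fun w => f₁ r₀ z₀ w) w₀;
             deriv (fun r => f₂ r z₀ w₀) r₀, deriv (fun z => f₂ r₀ z w₀) z₀,
              deriv (fun w => f₂ r₀ z₀ w) w₀;
             deriv (fun r => f₃ r z₀ w₀) r₀, deriv (fun z => f₃ r₀ z w₀) z₀,
              deriv (fun w => f₃ r₀ z₀ w) w₀] ≠ 0) := by
  intro _ _ _ _ _ r₀ hr₀
  have hdet := LorenzHaken.det_jacobian3_at_s₂₃ a₁ b₁ c d e hc hd h3d ha₁.le hrad hr₀
  have hS : √(3 * d ^ 2 - c ^ 2) ≠ 0 := (sqrt_pos.mpr h3d).ne'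
  exact ⟨hdet, fun ha hb hQ => hdet.trans_ne (by positivity)⟩
end

section
/- At the zeros s₁,₂ of the averaged system (h₁, h₂, h₃) from the zero-Hopf bifurcation at p±, the determinant of the Jacobian of (h₁,h₂,h₃) equals a₁²b₁(4c² - 3ce + 3ω²)/(2ω⁵); in particular it is nonzero when a₁ ≠ 0 and b₁(4c² - 3ce + 3ω²) < 0. -/
/-!
At `s₁,₂` we have `z = 0` and `2c²w + a₁ω² = 0`, which kills every entry of the Jacobian except
`∂h₁/∂w`, `∂h₂/∂z`, `∂h₃/∂r` and `∂h₃/∂w`. The determinant is therefore the product of the first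
three, a multiple of `r²`, and substituting the value of `r²` at the zeros gives the formula.
-/

noncomputable def jacobian₃ (f₁ f₂ f₃ : ℝ → ℝ → ℝ → ℝ) (x y z : ℝ) : Matrix (Fin 3) (Fin 3) ℝ :=
  !![deriv (fun x => f₁ x y z) x, deriv (fun y => f₁ x y z) y, deriv (fun z => f₁ x y z) z;
     deriv (fun x => f₂ x y z) x, deriv (fun y => f₂ x y z) y, deriv (fun z => f₂ x y z) z;
     deriv (fun x => f₃ x y z) x, deriv (fun y => f₃ x y z) y, deriv (fun z => f₃ x y z) z]

noncomputable def averagedR (ω c a₁ r _z w : ℝ) : ℝ :=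
  -(r * (2 * c ^ 2 * w + a₁ * ω ^ 2)) / (2 * ω ^ 3)

noncomputable def averagedZ (ω c _r z w : ℝ) : ℝ := 2 * c ^ 2 * w * z / ω ^ 3

noncomputable def averagedW (ω c e b₁ r z w : ℝ) : ℝ :=
  (24 * c ^ 4 * z ^ 2 + c * (4 * c ^ 3 * r ^ 2 - 12 * b₁ * c * w + 9 * b₁ * e * w) * ω ^ 2
    + (4 * c ^ 2 * r ^ 2 - 9 * b₁ * w) * ω ^ 4) / (6 * ω ^ 5)

section AveragedSystem

variable {ω c e a₁ b₁ : ℝ}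

theorem jacobian_averaged (hω : ω ≠ 0) (r z w : ℝ) :
    jacobian₃ (averagedR ω c a₁) (averagedZ ω c) (averagedW ω c e b₁) r z w =
      !![-(2 * c ^ 2 * w + a₁ * ω ^ 2) / (2 * ω ^ 3), 0, -(c ^ 2 * r) / ω ^ 3;
         0, 2 * c ^ 2 * w / ω ^ 3, 2 * c ^ 2 * z / ω ^ 3;
         4 * c ^ 2 * (c ^ 2 + ω ^ 2) * r / (3 * ω ^ 3), 8 * c ^ 4 * z / ω ^ 5,
           -(b₁ * (4 * c ^ 2 - 3 * c * e + 3 * ω ^ 2)) / (2 * ω ^ 3)] := by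
  simp only [jacobian₃, EmbeddingLike.apply_eq_iff_eq, Matrix.vecCons_inj, and_true]
  simp (disch := fun_prop) only [averagedR, averagedZ, averagedW, deriv_div_const, deriv_fun_add,
    deriv_fun_sub, deriv.fun_neg', deriv_const_mul_field', deriv_mul_const_field', deriv_fun_pow,
    deriv_id'', deriv_const', deriv_const_mul_id', Nat.cast_ofNat, Nat.add_one_sub_one, pow_one,
    mul_one, one_mul, mul_zero, add_zero, zero_add, sub_zero, zero_sub, neg_zero, zero_div,
    true_and, and_true]
  refine ⟨?_, ?_, ?_, ?_⟩ <;> field_simp <;> ring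

theorem det_jacobian_averaged_at_critical_w (hω : ω ≠ 0) (hc : c ≠ 0) (r : ℝ) :
    (jacobian₃ (averagedR ω c a₁) (averagedZ ω c) (averagedW ω c e b₁) r 0
        (-(a₁ * ω ^ 2) / (2 * c ^ 2))).det =
      -(4 * c ^ 4 * a₁ * (c ^ 2 + ω ^ 2) * r ^ 2) / (3 * ω ^ 7) := by
  rw [jacobian_averaged hω, Matrix.det_fin_three]
  simp only [Matrix.of_apply, Matrix.cons_val', Matrix.cons_val, Matrix.cons_val_fin_one]
  field_simp
  ring

end AveragedSystem

theorem sq_radius_of_averaged_zero (ω c : ℝ) {a₁ κ : ℝ} (ha₁ : 0 ≤ a₁) (hκ : 0 ≤ κ) :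
    (1 / (2 * c ^ 2) * √(3 / 2) * √a₁ * ω * √κ) ^ 2 = 3 * a₁ * ω ^ 2 * κ / (8 * c ^ 4) := by
  rw [mul_pow, mul_pow, mul_pow, mul_pow, Real.sq_sqrt hκ, Real.sq_sqrt ha₁,
    Real.sq_sqrt (by norm_num)]
  ring

/-- At the zeros `s₁,₂` of the averaged system from the zero-Hopf bifurcation at `p±`,
the Jacobian determinant equals `a₁²b₁(4c² - 3ce + 3ω²)/(2ω⁵)`, nonzero when `a₁ ≠ 0` and
`b₁(4c² - 3ce + 3ω²) < 0`. -/
theorem averaged_system_ppm_jacobian_s12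
    (ω c e a₁ b₁ : ℝ) (hω : 0 < ω) (hc : c ≠ 0) (ha₁ : 0 < a₁)
    (hκ : b₁ * (4 * c ^ 2 - 3 * c * e + 3 * ω ^ 2) < 0) :
    let h₁ : ℝ → ℝ → ℝ → ℝ := fun r z w =>
      -(r * (2 * c ^ 2 * w + a₁ * ω ^ 2)) / (2 * ω ^ 3)
    let h₂ : ℝ → ℝ → ℝ → ℝ := fun r z w => 2 * c ^ 2 * w * z / ω ^ 3
    let h₃ : ℝ → ℝ → ℝ → ℝ := fun r z w =>
      (24 * c ^ 4 * z ^ 2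
        + c * (4 * c ^ 3 * r ^ 2 - 12 * b₁ * c * w + 9 * b₁ * e * w) * ω ^ 2
        + (4 * c ^ 2 * r ^ 2 - 9 * b₁ * w) * ω ^ 4) / (6 * ω ^ 5)
    let z₀ : ℝ := 0
    let w₀ : ℝ := -(a₁ * ω ^ 2) / (2 * c ^ 2)
    ∀ r₀ : ℝ,
      (r₀ = 1 / (2 * c ^ 2) * Real.sqrt (3 / 2) * Real.sqrt a₁ * ω
          * Real.sqrt (b₁ * (3 * c * e - 4 * c ^ 2 - 3 * ω ^ 2) / (c ^ 2 + ω ^ 2)) ∨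
       r₀ = -(1 / (2 * c ^ 2) * Real.sqrt (3 / 2) * Real.sqrt a₁ * ω
          * Real.sqrt (b₁ * (3 * c * e - 4 * c ^ 2 - 3 * ω ^ 2) / (c ^ 2 + ω ^ 2)))) →
      (Matrix.det
          !![deriv (fun r => h₁ r z₀ w₀) r₀, deriv (fun z => h₁ r₀ z w₀) z₀,
              deriv (fun w => h₁ r₀ z₀ w) w₀;
             deriv (fun r => h₂ r z₀ w₀) r₀, deriv (fun z => h₂ r₀ z w₀) z₀,
              deriv (fun w => h₂ r₀ z₀ w) w₀;
             deriv (fun r => h₃ r z₀ w₀) r₀, deriv (fun z => h₃ r₀ z w₀) z₀,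
              deriv (fun w => h₃ r₀ z₀ w) w₀] =
        a₁ ^ 2 * b₁ * (4 * c ^ 2 - 3 * c * e + 3 * ω ^ 2) / (2 * ω ^ 5)) ∧
      (a₁ ≠ 0 → b₁ * (4 * c ^ 2 - 3 * c * e + 3 * ω ^ 2) < 0 →
        Matrix.det
          !![deriv (fun r => h₁ r z₀ w₀) r₀, deriv (fun z => h₁ r₀ z w₀) z₀,
              deriv (fun w => h₁ r₀ z₀ w) w₀;
             deriv (fun r => h₂ r z₀ w₀) r₀, deriv (fun z => h₂ r₀ z w₀) z₀,
              deriv (fun w => h₂ r₀ z₀ w) w₀;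
             deriv (fun r => h₃ r z₀ w₀) r₀, deriv (fun z => h₃ r₀ z w₀) z₀,
              deriv (fun w => h₃ r₀ z₀ w) w₀] ≠ 0) := by
  intro h₁ h₂ h₃ z₀ w₀ r₀ hr₀
  have hκ' : 0 ≤ b₁ * (3 * c * e - 4 * c ^ 2 - 3 * ω ^ 2) / (c ^ 2 + ω ^ 2) :=
    div_nonneg (by linarith) (by positivity)
  have hr₀_sq := (sq_eq_sq_iff_eq_or_eq_neg.mpr hr₀).trans
    (sq_radius_of_averaged_zero ω c ha₁.le hκ')
  -- The `let`-bound `hᵢ` unfold to `averagedR`, `averagedZ`, `averagedW`, so the goal's matrix is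
  -- `jacobian₃` of them by definition.
  have hdet : (jacobian₃ (averagedR ω c a₁) (averagedZ ω c) (averagedW ω c e b₁) r₀ z₀ w₀).det =
      a₁ ^ 2 * b₁ * (4 * c ^ 2 - 3 * c * e + 3 * ω ^ 2) / (2 * ω ^ 5) := by
    rw [det_jacobian_averaged_at_critical_w hω.ne' hc, hr₀_sq]
    field_simp
    ring
  refine ⟨hdet, fun ha hb => hdet ▸ div_ne_zero ?_ (by positivity)⟩
  rw [mul_assoc]
  exact mul_ne_zero (pow_ne_zero 2 ha) hb.ne
end

section
/- Let κ = b₁(4c² - 3ce + 3ω²) with ω > 0, and consider the cubic λ³ + ((b₁c(4c-3e) + (2a₁+3b₁)ω²)/(2ω³))λ² - a₁²b₁(4c²-3ce+3ω²)/(2ω⁵). Then λ₁ = -a₁/ω is a root, and the other two roots are λ₂,₃ = -(κ ± √(κ(κ + 8a₁ω²)))/(4ω³). Moreover, if a₁ > 0 and κ < 0, then at least one of λ₂, λ₃ has positive real part (so the corresponding periodic orbit is unstable). -/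
/-!
With `p = κ / (2ω³)` and `r = a₁ / ω` the cubic is `λ³ + (p + r) λ² - r² p`, which factors as
`(λ + r) (λ² + p λ - r p)`. So `-r` is a root and the other two are the roots of the quadratic
factor, whose discriminant `p² + 4 r p` is `κ (κ + 8 a₁ ω²) / (4 ω⁶)`. These two roots sum to
`-p`, which is positive when `κ < 0`, so one of them has positive real part.
-/

section Cubic

variable {K : Type*} [Field K]

theorem cubic_eq_mul_quadratic (p r x : K) :
    x ^ 3 + (p + r) * x ^ 2 - r ^ 2 * p = (x + r) * (x ^ 2 + p * x - r * p) := by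
  ring

theorem cubic_eval_neg (p r : K) : (-r) ^ 3 + (p + r) * (-r) ^ 2 - r ^ 2 * p = 0 := by
  ring

theorem cubic_eval_eq_zero_of_sq_eq_discrim [NeZero (2 : K)] {p r x : K}
    (hx : (2 * x + p) ^ 2 = p ^ 2 + 4 * r * p) :
    x ^ 3 + (p + r) * x ^ 2 - r ^ 2 * p = 0 := by
  have hquad : x ^ 2 + p * x - r * p = 0 := by
    have h4 : (4 : K) ≠ 0 := by simpa [show (4 : K) = 2 * 2 by norm_num] using NeZero.ne (2 : K)
    refine (mul_eq_zero.mp ?_).resolve_left h4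
    linear_combination hx
  rw [cubic_eq_mul_quadratic, hquad, mul_zero]

end Cubic

theorem Complex.re_pos_or_re_pos_of_re_add_pos {z w : ℂ} (h : 0 < (z + w).re) :
    0 < z.re ∨ 0 < w.re := by
  by_contra! hle
  rw [Complex.add_re] at h
  linarith [hle.1, hle.2]

/-- For `κ = b₁(4c² - 3ce + 3ω²)`, the cubic
`λ³ + ((b₁c(4c-3e) + (2a₁+3b₁)ω²)/(2ω³))λ² - a₁²b₁(4c²-3ce+3ω²)/(2ω⁵)` has
`λ₁ = -a₁/ω` as a root, its other two roots are
`λ₂,₃ = -(κ ± √(κ(κ + 8a₁ω²)))/(4ω³)`, and if `a₁ > 0` and `κ < 0` at least one of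
`λ₂, λ₃` has positive real part. -/
theorem cubic_ppm_roots_unstable (ω c e a₁ b₁ : ℝ) (hω : 0 < ω) :
    let κ : ℝ := b₁ * (4 * c ^ 2 - 3 * c * e + 3 * ω ^ 2)
    let P : ℂ → ℂ := fun lam =>
      lam ^ 3
        + (((b₁ * c * (4 * c - 3 * e) + (2 * a₁ + 3 * b₁) * ω ^ 2) / (2 * ω ^ 3) : ℝ) : ℂ)
            * lam ^ 2
        - ((a₁ ^ 2 * b₁ * (4 * c ^ 2 - 3 * c * e + 3 * ω ^ 2) / (2 * ω ^ 5) : ℝ) : ℂ)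
    P ((-(a₁ / ω) : ℝ) : ℂ) = 0 ∧
    ∀ μ : ℂ, μ ^ 2 = ((κ * (κ + 8 * a₁ * ω ^ 2) : ℝ) : ℂ) →
      P (-(((κ : ℝ) : ℂ) + μ) / ((4 * ω ^ 3 : ℝ) : ℂ)) = 0 ∧
      P (-(((κ : ℝ) : ℂ) - μ) / ((4 * ω ^ 3 : ℝ) : ℂ)) = 0 ∧
      (0 < a₁ → κ < 0 →
        0 < (-(((κ : ℝ) : ℂ) + μ) / ((4 * ω ^ 3 : ℝ) : ℂ)).re ∨
        0 < (-(((κ : ℝ) : ℂ) - μ) / ((4 * ω ^ 3 : ℝ) : ℂ)).re) := by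
  intro κ P
  have hω' : (ω : ℂ) ≠ 0 := by exact_mod_cast hω.ne'
  have hP : ∀ x, P x = x ^ 3 + (κ / (2 * ω ^ 3) + a₁ / ω) * x ^ 2
      - (a₁ / ω) ^ 2 * (κ / (2 * ω ^ 3)) := by
    intro x
    simp only [P, κ]
    push_cast
    field_simp
    ring
  have hroot : ∀ s : ℂ, s ^ 2 = κ * (κ + 8 * a₁ * ω ^ 2) →
      P (-((κ : ℂ) + s) / ((4 * ω ^ 3 : ℝ) : ℂ)) = 0 := by
    intro s hs
    rw [hP]
    refine cubic_eval_eq_zero_of_sq_eq_discrim ?_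
    push_cast
    field_simp
    linear_combination 16 * hs
  refine ⟨by rw [hP]; push_cast; exact cubic_eval_neg _ _, fun μ hμ => ?_⟩
  have hμ' : μ ^ 2 = κ * (κ + 8 * a₁ * ω ^ 2) := by exact_mod_cast hμ
  refine ⟨hroot μ hμ', ?_, fun _ hκ => ?_⟩
  · simpa [sub_eq_add_neg] using hroot (-μ) (by rw [neg_sq, hμ'])
  · refine Complex.re_pos_or_re_pos_of_re_add_pos ?_
    have hsum : -((κ : ℂ) + μ) / ((4 * ω ^ 3 : ℝ) : ℂ) + -((κ : ℂ) - μ) / ((4 * ω ^ 3 : ℝ) : ℂ)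
        = ((-κ / (2 * ω ^ 3) : ℝ) : ℂ) := by
      push_cast
      field_simp
      ring
    rw [hsum, Complex.ofReal_re]
    exact div_pos (neg_pos.mpr hκ) (by positivity)
end
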